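/- Let t = 3, k₁ ≥ k₂ ≥ k₃, and k₁ + k₃ ≤ n < k₁ + k₂. If ℱ₁ ⊆ binomial([n],k₁), ℱ₂ ⊆ binomial([n],k₂), ℱ₃ ⊆ binomial([n],k₃) are nonempty pairwise cross intersecting, then |ℱ₁| + |ℱ₂| + |ℱ₃| ≤ (C(n,k₁) − C(n−k₃,k₁)) + (C(n,k₂) − C(n−k₃,k₂)) + 1. -/
import Mathlib


open Finset

/-- Lexicographic order on finite sets: `A ≼ B` iff `A ⊇ B` or `min (A \ B) < min (B \ A)`. -/
def lexLE (A B : Finset ℕ) : Prop := B ⊆ A ∨ (A \ B).min < (B \ A).min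

instance : DecidableRel lexLE := fun A B => by unfold lexLE; infer_instance

/-- The family of all `k`-element subsets of `[n] = {1,…,n}`. -/
def ksubsets (n k : ℕ) : Finset (Finset ℕ) := (Finset.Icc 1 n).powersetCard k

/-- Two families are cross intersecting. -/
def crossInt (A B : Finset (Finset ℕ)) : Prop := ∀ X ∈ A, ∀ Y ∈ B, (X ∩ Y).Nonempty

/-- `ℒ([n], R, k)`: all `k`-subsets of `[n]` lexicographically no more than `R`. -/
def Lfam (n : ℕ) (R : Finset ℕ) (k : ℕ) : Finset (Finset ℕ) :=
  (ksubsets n k).filter (fun F => lexLE F R)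

/-- `ℒ([n], r, k)`: the first `r` sets of `binomial([n],k)` in lexicographic order. -/
def Lnum (n r k : ℕ) : Finset (Finset ℕ) :=
  (ksubsets n k).filter (fun F => ((ksubsets n k).filter (fun G => lexLE G F)).card ≤ r)

/-- `F` and `H` are partners: they strongly intersect at their last element. -/
def isPartner (F H : Finset ℕ) : Prop := ∃ q, F ∩ H = {q} ∧ F ∪ H = Finset.Icc 1 q

/-- `K` is the `k`-partner of `F` (inside `[n]`). -/
def isKPartner (n : ℕ) (F : Finset ℕ) (k : ℕ) (K : Finset ℕ) : Prop :=
  ∃ H, isPartner F H ∧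
    ((k = H.card ∧ K = H) ∨
     (H.card < k ∧ K = H ∪ Finset.Icc (n - k + H.card + 1) n) ∨
     (k < H.card ∧ K ∈ ksubsets n k ∧ lexLE K H ∧
        ∀ K' ∈ ksubsets n k, lexLE K' H → lexLE K' K))

/-- `ℓ(F)`: the length of the maximal tail interval `[n-ℓ+1, n] ⊆ F`. -/
def tailLen (n : ℕ) (F : Finset ℕ) : ℕ :=
  ((Finset.range (n + 1)).filter (fun x => Finset.Icc (n - x + 1) n ⊆ F)).sup id

/-- `F^t = [n - ℓ(F) + 1, n]`. -/
def tailSet (n : ℕ) (F : Finset ℕ) : Finset ℕ := Finset.Icc (n - tailLen n F + 1) n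

/-- `𝒜` (a family of `f`-subsets of `[n]`) is maximal with respect to `ℬ`. -/
def maximalTo (n f : ℕ) (A B : Finset (Finset ℕ)) : Prop :=
  ∀ A' ⊆ ksubsets n f, A ⊆ A' → crossInt A' B → A' = A

/-- The pair of sets `(A, B)` is maximal. -/
def pairMaximal (n : ℕ) (A B : Finset ℕ) : Prop :=
  crossInt (Lfam n A A.card) (Lfam n B B.card) ∧
  maximalTo n A.card (Lfam n A A.card) (Lfam n B B.card) ∧
  maximalTo n B.card (Lfam n B B.card) (Lfam n A A.card)

/-- `A` is the `|A|`-parity of `B`: same set after removing tails, and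
`ℓ(B) - ℓ(A) = |B| - |A|` (stated additively). -/
def isParity (n : ℕ) (A B : Finset ℕ) : Prop :=
  A \ tailSet n A = B \ tailSet n B ∧ tailLen n A + B.card = tailLen n B + A.card

lemma pascalAdd (n k : ℕ) : (n+1).choose (k+1) = n.choose k + n.choose (k+1) := by
  simp [Nat.choose_succ_succ]

lemma pascal' {n a : ℕ} (hn : 1 ≤ n) (ha : 1 ≤ a) :
    n.choose a = (n-1).choose (a-1) + (n-1).choose a := by
  obtain ⟨m, rfl⟩ : ∃ m, n = m + 1 := ⟨n - 1, by omega⟩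
  obtain ⟨c, rfl⟩ : ∃ c, a = c + 1 := ⟨a - 1, by omega⟩
  simp [Nat.choose_succ_succ]

lemma chooseV (t N k : ℕ) : N.choose k ≤ (N + t).choose (k + t) := by
  induction t with
  | zero => simp
  | succ t ih =>
    have h2 : (N + t).choose (k + t) ≤ (N + t + 1).choose (k + t + 1) := by
      rw [pascalAdd]; omega
    have e1 : N + (t + 1) = N + t + 1 := by omega
    have e2 : k + (t + 1) = k + t + 1 := by omega
    rw [e1, e2]; omega

lemma chooseChain (m b : ℕ) : ∀ d, 2 * (b + d) ≤ m → m.choose b ≤ m.choose (b + d) := by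
  intro d
  induction d with
  | zero => simp
  | succ d ih =>
    intro h
    have h1 : m.choose b ≤ m.choose (b + d) := ih (by omega)
    have h2 : m.choose (b + d) ≤ m.choose (b + d + 1) :=
      Nat.choose_le_succ_of_lt_half_left (by omega)
    have e : b + (d + 1) = b + d + 1 := by omega
    rw [e]; omega

lemma chooseU {m b a : ℕ} (hba : b ≤ a) (ham : a + b ≤ m) : m.choose b ≤ m.choose a := by
  by_cases h2 : 2 * a ≤ m
  · have := chooseChain m b (a - b) (by omega)
    rwa [show b + (a-b) = a by omega] at this
  · have hsymm : m.choose (m - a) = m.choose a := Nat.choose_symm (by omega)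
    have := chooseChain m b ((m - a) - b) (by omega)
    rwa [show b + ((m-a)-b) = m - a by omega, hsymm] at this

/-- Key binomial inequality `D(s,a,b) ≥ 0`:
`C(a+b+s+1, b) + C(a+s, a) ≤ C(a+b+s+1, a) + C(b+s, b)` for `b ≤ a`. -/
lemma cG : ∀ b a s : ℕ, b ≤ a →
    (a + b + s + 1).choose b + (a + s).choose a ≤ (a + b + s + 1).choose a + (b + s).choose b := by
  intro b
  induction b with
  | zero =>
    intro a s _
    have : (a + s).choose a ≤ (a + 0 + s + 1).choose a := Nat.choose_le_choose a (by omega)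
    simp only [Nat.choose_zero_right]
    omega
  | succ b ihb =>
    intro a s hba
    obtain ⟨c, rfl⟩ : ∃ c, a = c + 1 := ⟨a - 1, by omega⟩
    have hbc : b ≤ c := by omega
    induction s with
    | zero =>
      have hU : (c + 1 + (b+1) + 0 + 1).choose (b+1) ≤ (c + 1 + (b+1) + 0 + 1).choose (c+1) :=
        chooseU hba (by omega)
      have e1 : c + 1 + 0 = c + 1 := by omega
      have e2 : b + 1 + 0 = b + 1 := by omega
      rw [e1, e2, Nat.choose_self, Nat.choose_self]
      omega
    | succ s ihs =>
      have hrem : (c+b+s+3).choose b + (c+s+1).choose c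
          ≤ (c+b+s+3).choose c + (b+s+1).choose b := by
        rcases Nat.eq_zero_or_pos b with rfl | hbpos
        · have : (c+s+1).choose c ≤ (c+0+s+3).choose c := Nat.choose_le_choose c (by omega)
          simp only [Nat.choose_zero_right]
          omega
        · obtain ⟨d, rfl⟩ : ∃ d, b = d + 1 := ⟨b - 1, by omega⟩
          obtain ⟨e, rfl⟩ : ∃ e, c = e + 1 := ⟨c - 1, by omega⟩
          have hIH2 := ihb (e + 1) (s + 2) (by omega)
          rw [show e + 1 + (d + 1) + (s + 2) + 1 = (e + d + s + 5 : ℕ) by omega,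
            show e + 1 + (s + 2) = ((e + s + 2) + 1 : ℕ) by omega,
            show d + 1 + (s + 2) = ((d + s + 2) + 1 : ℕ) by omega,
            pascalAdd (e+s+2) e, pascalAdd (d+s+2) d] at hIH2
          -- hIH2 : C(e+d+s+5, d+1) + (C(e+s+2,e) + C(e+s+2,e+1))
          --        ≤ C(e+d+s+5, e+1) + (C(d+s+2,d) + C(d+s+2,d+1))
          have hV := chooseV (e - d) (d+s+2) d
          rw [show d + s + 2 + (e - d) = (e + s + 2 : ℕ) by omega,
            show d + (e - d) = (e : ℕ) by omega] at hV
          -- goal : C(e+1+(d+1)+s+3, d+1) + C(e+1+s+1, e+1) ≤ ... + C(d+1+s+1, d+1)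
          rw [show e + 1 + (d+1) + s + 3 = (e + d + s + 5 : ℕ) by omega,
            show e + 1 + s + 1 = (e + s + 2 : ℕ) by omega,
            show d + 1 + s + 1 = (d + s + 2 : ℕ) by omega]
          omega
      -- main assembly
      have hIH1 := ihs
      rw [show c + 1 + (b + 1) + s + 1 = ((c+b+s+2) + 1 : ℕ) by omega,
        show c + 1 + s = (c + s + 1 : ℕ) by omega,
        show b + 1 + s = (b + s + 1 : ℕ) by omega] at hIH1
      -- hIH1 : C(c+b+s+3, b+1) + C(c+s+1, c+1) ≤ C(c+b+s+3, c+1) + C(b+s+1, b+1)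
      rw [show c + 1 + (b + 1) + (s + 1) + 1 = ((c + b + s + 3) + 1 : ℕ) by omega,
        show c + 1 + (s + 1) = ((c + s + 1) + 1 : ℕ) by omega,
        show b + 1 + (s + 1) = ((b + s + 1) + 1 : ℕ) by omega,
        pascalAdd (c+b+s+3) b, pascalAdd (c+s+1) c,
        pascalAdd (c+b+s+3) c, pascalAdd (b+s+1) b]
      have e4 : (c+b+s+2) + 1 = c+b+s+3 := by omega
      rw [e4] at hIH1
      omega

/-- replace `n` by `x` in a set, when possible -/
def mv (x n : ℕ) (A : Finset ℕ) : Finset ℕ :=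
  if n ∈ A ∧ x ∉ A then insert x (A.erase n) else A

/-- the `(x,n)`-compression of a family -/
def cpr (x n : ℕ) (F : Finset (Finset ℕ)) : Finset (Finset ℕ) :=
  F.filter (fun A => mv x n A ∈ F) ∪ (F.filter (fun A => mv x n A ∉ F)).image (mv x n)

/-- total weight of a family -/
def wt (F : Finset (Finset ℕ)) : ℕ := F.sum (fun A => A.sum id)

lemma mem_ksubsets {n k : ℕ} {S : Finset ℕ} :
    S ∈ ksubsets n k ↔ S ⊆ Icc 1 n ∧ S.card = k := by
  rw [ksubsets, mem_powersetCard]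

lemma card_Icc1 (n : ℕ) : (Icc 1 n).card = n := by rw [Nat.card_Icc]; omega

lemma card_ksubsets (n k : ℕ) : (ksubsets n k).card = n.choose k := by
  rw [ksubsets, card_powersetCard, card_Icc1]

lemma crossInt_comm {A B : Finset (Finset ℕ)} (h : crossInt A B) : crossInt B A :=
  fun Y hY X hX => by rw [inter_comm]; exact h X hX Y hY

lemma mv_card {x n : ℕ} (A : Finset ℕ) : (mv x n A).card = A.card := by
  unfold mv; split_ifs with h
  · rw [card_insert_of_notMem (fun hx => h.2 (mem_of_mem_erase hx)), card_erase_of_mem h.1]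
    have : 0 < A.card := card_pos.2 ⟨n, h.1⟩
    omega
  · rfl

lemma mv_subset {x n m : ℕ} (hx : x ∈ Icc 1 m) {A : Finset ℕ} (hA : A ⊆ Icc 1 m) :
    mv x n A ⊆ Icc 1 m := by
  unfold mv; split_ifs with h
  · exact insert_subset hx ((erase_subset _ _).trans hA)
  · exact hA

lemma mv_strict {x n : ℕ} {F : Finset (Finset ℕ)} {A : Finset ℕ}
    (hA : A ∈ F) (h : mv x n A ∉ F) : n ∈ A ∧ x ∉ A := by
  by_contra hc; rw [mv, if_neg hc] at h; exact h hA

lemma mv_mem_x {x n : ℕ} {A : Finset ℕ} (h : n ∈ A ∧ x ∉ A) : x ∈ mv x n A := by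
  rw [mv, if_pos h]; exact mem_insert_self _ _

lemma mv_inj {x n : ℕ} {A A' : Finset ℕ} (hA : n ∈ A ∧ x ∉ A)
    (hA' : n ∈ A' ∧ x ∉ A') (h : mv x n A = mv x n A') : A = A' := by
  rw [mv, if_pos hA, mv, if_pos hA'] at h
  have e : ∀ B : Finset ℕ, n ∈ B → x ∉ B → insert n ((insert x (B.erase n)).erase x) = B := by
    intro B hn hx
    rw [erase_insert (fun hxx => hx (mem_of_mem_erase hxx)), insert_erase hn]
  rw [← e A hA.1 hA.2, ← e A' hA'.1 hA'.2, h]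

lemma mem_cpr {x n : ℕ} {F : Finset (Finset ℕ)} {S : Finset ℕ} :
    S ∈ cpr x n F ↔ (S ∈ F ∧ mv x n S ∈ F) ∨ (∃ A ∈ F, mv x n A ∉ F ∧ mv x n A = S) := by
  simp only [cpr, mem_union, mem_filter, mem_image]
  constructor
  · rintro (⟨h1, h2⟩ | ⟨A, ⟨hA, hmv⟩, he⟩)
    · exact Or.inl ⟨h1, h2⟩
    · exact Or.inr ⟨A, hA, hmv, he⟩
  · rintro (⟨h1, h2⟩ | ⟨A, hA, hmv, he⟩)
    · exact Or.inl ⟨h1, h2⟩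
    · exact Or.inr ⟨A, ⟨hA, hmv⟩, he⟩

lemma cpr_disj {x n : ℕ} {F : Finset (Finset ℕ)} :
    Disjoint (F.filter (fun A => mv x n A ∈ F)) ((F.filter (fun A => mv x n A ∉ F)).image (mv x n)) := by
  rw [disjoint_left]
  intro S hS hS'
  obtain ⟨A, hA, hAe⟩ := mem_image.1 hS'
  exact (mem_filter.1 hA).2 (hAe ▸ (mem_filter.1 hS).1)

lemma cpr_card {x n : ℕ} (F : Finset (Finset ℕ)) : (cpr x n F).card = F.card := by
  rw [cpr, card_union_of_disjoint cpr_disj, card_image_of_injOn, card_filter_add_card_filter_not]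
  intro A hA A' hA' hAA'
  rw [mem_coe, mem_filter] at hA hA'
  exact mv_inj (mv_strict hA.1 hA.2) (mv_strict hA'.1 hA'.2) hAA'

lemma cpr_subset_ks {x n m k : ℕ} (hx : x ∈ Icc 1 m) {F : Finset (Finset ℕ)}
    (hF : F ⊆ ksubsets m k) : cpr x n F ⊆ ksubsets m k := by
  intro S hS
  rcases mem_cpr.1 hS with ⟨h1, _⟩ | ⟨A, hA, _, rfl⟩
  · exact hF h1
  · have h2 := mem_ksubsets.1 (hF hA)
    exact mem_ksubsets.2 ⟨mv_subset hx h2.1, by rw [mv_card]; exact h2.2⟩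

lemma key {x n : ℕ} {𝒜 ℬ : Finset (Finset ℕ)} (h : crossInt 𝒜 ℬ) {A B : Finset ℕ}
    (hA : A ∈ 𝒜) (hmA : n ∈ A ∧ x ∉ A) (hB : B ∈ ℬ) (hBc : mv x n B ∈ ℬ) :
    (mv x n A ∩ B).Nonempty := by
  obtain ⟨z, hz⟩ := h A hA B hB
  rw [mem_inter] at hz
  by_cases hzn : z = n
  · have hnB : n ∈ B := hzn ▸ hz.2
    by_cases hxB : x ∈ B
    · exact ⟨x, mem_inter.2 ⟨mv_mem_x hmA, hxB⟩⟩
    · have hBm : mv x n B = insert x (B.erase n) := by rw [mv, if_pos ⟨hnB, hxB⟩]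
      obtain ⟨w, hw⟩ := h A hA _ hBc
      rw [mem_inter, hBm, mem_insert] at hw
      rcases hw.2 with rfl | hwB
      · exact absurd hw.1 hmA.2
      · refine ⟨w, mem_inter.2 ⟨?_, mem_of_mem_erase hwB⟩⟩
        rw [mv, if_pos hmA]
        exact mem_insert_of_mem (mem_erase.2 ⟨(mem_erase.1 hwB).1, hw.1⟩)
  · refine ⟨z, mem_inter.2 ⟨?_, hz.2⟩⟩
    rw [mv, if_pos hmA]
    exact mem_insert_of_mem (mem_erase.2 ⟨hzn, hz.1⟩)

lemma cpr_cross {x n : ℕ} {𝒜 ℬ : Finset (Finset ℕ)} (h : crossInt 𝒜 ℬ) :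
    crossInt (cpr x n 𝒜) (cpr x n ℬ) := by
  intro S hS T hT
  rcases mem_cpr.1 hS with ⟨hS1, hS2⟩ | ⟨A, hA, hmvA, rfl⟩
  · rcases mem_cpr.1 hT with ⟨hT1, _⟩ | ⟨B, hB, hmvB, rfl⟩
    · exact h S hS1 T hT1
    · rw [inter_comm]
      exact key (crossInt_comm h) hB (mv_strict hB hmvB) hS1 hS2
  · rcases mem_cpr.1 hT with ⟨hT1, hT2⟩ | ⟨B, hB, hmvB, rfl⟩
    · exact key h hA (mv_strict hA hmvA) hT1 hT2
    · exact ⟨x, mem_inter.2 ⟨mv_mem_x (mv_strict hA hmvA), mv_mem_x (mv_strict hB hmvB)⟩⟩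

lemma mv_wt {x n : ℕ} {A : Finset ℕ} (h : n ∈ A ∧ x ∉ A) :
    (mv x n A).sum id + n = A.sum id + x := by
  rw [mv, if_pos h, sum_insert (fun hx => h.2 (mem_of_mem_erase hx))]
  have h2 := Finset.sum_erase_add A id h.1
  simp only [id] at h2 ⊢
  omega

lemma cpr_wt_lt {x n : ℕ} (hxn : x < n) {F : Finset (Finset ℕ)} (h : cpr x n F ≠ F) :
    wt (cpr x n F) < wt F := by
  have hfne : (F.filter (fun A => mv x n A ∉ F)).Nonempty := by
    rw [nonempty_iff_ne_empty]
    intro hc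
    apply h
    have h1 : F.filter (fun A => mv x n A ∈ F) = F := by
      rw [filter_eq_self]
      intro A hA
      by_contra hmv
      have : A ∈ F.filter (fun A => mv x n A ∉ F) := mem_filter.2 ⟨hA, hmv⟩
      rw [hc] at this
      exact notMem_empty _ this
    rw [cpr, hc, image_empty, union_empty, h1]
  have hinj : Set.InjOn (mv x n) (F.filter (fun A => mv x n A ∉ F)) := by
    intro A hA A' hA' hAA'
    rw [mem_coe, mem_filter] at hA hA'
    exact mv_inj (mv_strict hA.1 hA.2) (mv_strict hA'.1 hA'.2) hAA'
  have hlt : ∑ A ∈ F.filter (fun A => mv x n A ∉ F), (mv x n A).sum id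
      < ∑ A ∈ F.filter (fun A => mv x n A ∉ F), A.sum id := by
    apply sum_lt_sum_of_nonempty hfne
    intro A hA
    have hs := mv_strict (mem_filter.1 hA).1 (mem_filter.1 hA).2
    have := mv_wt (x := x) hs
    omega
  have hsplit := sum_filter_add_sum_filter_not F (fun A => mv x n A ∈ F) (fun A => A.sum id)
  rw [wt, cpr, sum_union cpr_disj, sum_image hinj]
  rw [wt, ← hsplit]
  omega

lemma cpr_closed {x n : ℕ} {F : Finset (Finset ℕ)} (h : cpr x n F = F) {A : Finset ℕ}
    (hA : A ∈ F) (hn : n ∈ A) (hx : x ∉ A) : insert x (A.erase n) ∈ F := by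
  have hmv : mv x n A = insert x (A.erase n) := by rw [mv, if_pos ⟨hn, hx⟩]
  rw [← hmv]
  by_contra hc
  have hAc : A ∈ cpr x n F := h.symm ▸ hA
  rcases mem_cpr.1 hAc with ⟨_, h2⟩ | ⟨A', hA', hmv', heq⟩
  · exact hc h2
  · have := mv_mem_x (mv_strict hA' hmv')
    rw [heq] at this
    exact hx this

lemma meet_bound {n a : ℕ} {F : Finset (Finset ℕ)} {B : Finset ℕ}
    (hF : F ⊆ ksubsets n a) (hB : B ⊆ Icc 1 n)
    (hmeet : ∀ S ∈ F, (S ∩ B).Nonempty) :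
    F.card + (n - B.card).choose a ≤ n.choose a := by
  have hDcard : ((ksubsets n a).filter (fun S => S ∩ B = ∅)).card = (n - B.card).choose a := by
    have he : (ksubsets n a).filter (fun S => S ∩ B = ∅) = (Icc 1 n \ B).powersetCard a := by
      ext S
      simp only [mem_filter, mem_ksubsets, mem_powersetCard, subset_sdiff,
        disjoint_iff_inter_eq_empty]
      tauto
    rw [he, card_powersetCard, card_sdiff_of_subset hB, card_Icc1]
  have hdisj : Disjoint F ((ksubsets n a).filter (fun S => S ∩ B = ∅)) := by
    rw [disjoint_left]
    intro S hSF hSD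
    obtain ⟨z, hz⟩ := hmeet S hSF
    rw [(mem_filter.1 hSD).2] at hz
    exact notMem_empty z hz
  calc F.card + (n - B.card).choose a
      = (F ∪ (ksubsets n a).filter (fun S => S ∩ B = ∅)).card := by
        rw [card_union_of_disjoint hdisj, hDcard]
    _ ≤ (ksubsets n a).card := card_le_card (union_subset hF (filter_subset _ _))
    _ = n.choose a := card_ksubsets n a

lemma exists_unused {m : ℕ} {S : Finset ℕ} (h : S.card < m) : ∃ x, x ∈ Icc 1 m ∧ x ∉ S := by
  by_contra hc
  push_neg at hc
  have hsub : Icc 1 m ⊆ S := fun x hx => hc x hx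
  have := card_le_card hsub
  rw [card_Icc1] at this
  omega

lemma exists_avoid {n k : ℕ} {𝒜 : Finset (Finset ℕ)} (h𝒜 : 𝒜 ⊆ ksubsets n k)
    (hk : k < n) (hne : 𝒜.Nonempty)
    (hcomp : ∀ x, x ∈ Icc 1 (n-1) → cpr x n 𝒜 = 𝒜) :
    ∃ A ∈ 𝒜, n ∉ A := by
  obtain ⟨A, hA⟩ := hne
  by_cases hn : n ∈ A
  · have hc := (mem_ksubsets.1 (h𝒜 hA)).2
    have hpos : 0 < A.card := card_pos.2 ⟨n, hn⟩
    have hcard : (A.erase n).card < n - 1 := by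
      rw [card_erase_of_mem hn]
      omega
    obtain ⟨x, hx, hxA'⟩ := exists_unused hcard
    have hxb := mem_Icc.1 hx
    have hxn : x ≠ n := by omega
    have hxA : x ∉ A := fun h' => hxA' (mem_erase.2 ⟨hxn, h'⟩)
    refine ⟨insert x (A.erase n), cpr_closed (hcomp x hx) hA hn hxA, ?_⟩
    rw [mem_insert]
    rintro (h' | h')
    · exact hxn h'.symm
    · exact (mem_erase.1 h').1 rfl
  · exact ⟨A, hA, hn⟩

lemma erased_cross {n a b : ℕ} {𝒜 ℬ : Finset (Finset ℕ)}
    (hA : 𝒜 ⊆ ksubsets n a) (hB : ℬ ⊆ ksubsets n b)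
    (h : crossInt 𝒜 ℬ) (hab : a + b < n)
    (hcomp : ∀ x, x ∈ Icc 1 (n-1) → cpr x n 𝒜 = 𝒜)
    {A B : Finset ℕ} (hAm : A ∈ 𝒜) (hBm : B ∈ ℬ) (hnA : n ∈ A) (hnB : n ∈ B) :
    ((A.erase n) ∩ (B.erase n)).Nonempty := by
  by_contra hc
  rw [not_nonempty_iff_eq_empty] at hc
  have hcard : ((A ∪ B).erase n).card < n - 1 := by
    have h1 := card_erase_of_mem (mem_union_left B hnA)
    have h2 := card_union_le A B
    have ha := (mem_ksubsets.1 (hA hAm)).2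
    have hb := (mem_ksubsets.1 (hB hBm)).2
    have hpa : 0 < A.card := card_pos.2 ⟨n, hnA⟩
    have hpb : 0 < B.card := card_pos.2 ⟨n, hnB⟩
    omega
  obtain ⟨x, hx, hxAB⟩ := exists_unused hcard
  have hxb := mem_Icc.1 hx
  have hxn : x ≠ n := by omega
  have hxA : x ∉ A := fun h' => hxAB (mem_erase.2 ⟨hxn, mem_union_left _ h'⟩)
  have hxB : x ∉ B := fun h' => hxAB (mem_erase.2 ⟨hxn, mem_union_right _ h'⟩)
  have hins := cpr_closed (hcomp x hx) hAm hnA hxA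
  obtain ⟨z, hz⟩ := h _ hins B hBm
  rw [mem_inter, mem_insert] at hz
  rcases hz.1 with rfl | hzA
  · exact hxB hz.2
  · have hzn : z ≠ n := (mem_erase.1 hzA).1
    have hmem : z ∈ A.erase n ∩ B.erase n := mem_inter.2 ⟨hzA, mem_erase.2 ⟨hzn, hz.2⟩⟩
    rw [hc] at hmem
    exact notMem_empty z hmem
/-- Frankl–Tokushige: subtraction-free form. -/
lemma FTaux : ∀ n W a b (𝒜 ℬ : Finset (Finset ℕ)), 1 ≤ b → b ≤ a → a + b ≤ n →
    𝒜 ⊆ ksubsets n a → ℬ ⊆ ksubsets n b → 𝒜.Nonempty → ℬ.Nonempty →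
    crossInt 𝒜 ℬ → wt 𝒜 + wt ℬ ≤ W →
    𝒜.card + ℬ.card + (n - b).choose a ≤ n.choose a + 1 := by
  intro n
  induction n using Nat.strong_induction_on with
  | _ n ihn =>
  intro W
  induction W using Nat.strong_induction_on with
  | _ W ihW =>
  intro a b 𝒜 ℬ hb1 hba hab hA hB hAne hBne hcr hwt
  rcases eq_or_lt_of_le hab with heq | hlt
  · -- base case: n = a + b
    have hkey : 𝒜.card + ℬ.card ≤ n.choose a := by
      have hinj : Set.InjOn (fun T => Icc 1 n \ T) ℬ := by
        intro T hT T' hT' hTT'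
        have h1 := (mem_ksubsets.1 (hB hT)).1
        have h2 := (mem_ksubsets.1 (hB hT')).1
        have e : ∀ U : Finset ℕ, U ⊆ Icc 1 n → Icc 1 n \ (Icc 1 n \ U) = U := by
          intro U hU
          ext z
          simp only [mem_sdiff]
          constructor
          · tauto
          · exact fun hz => ⟨hU hz, fun h' => h'.2 hz⟩
        dsimp only at hTT'
        calc T = Icc 1 n \ (Icc 1 n \ T) := (e T h1).symm
          _ = Icc 1 n \ (Icc 1 n \ T') := by rw [hTT']
          _ = T' := e T' h2
      have hsub : ℬ.image (fun T => Icc 1 n \ T) ⊆ ksubsets n a := by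
        intro S hS
        obtain ⟨T, hT, rfl⟩ := mem_image.1 hS
        obtain ⟨hT1, hT2⟩ := mem_ksubsets.1 (hB hT)
        refine mem_ksubsets.2 ⟨sdiff_subset, ?_⟩
        rw [card_sdiff_of_subset hT1, card_Icc1, hT2]
        omega
      have hdisj : Disjoint 𝒜 (ℬ.image (fun T => Icc 1 n \ T)) := by
        rw [disjoint_left]
        intro S hS hS'
        obtain ⟨T, hT, rfl⟩ := mem_image.1 hS'
        obtain ⟨z, hz⟩ := hcr _ hS T hT
        rw [mem_inter, mem_sdiff] at hz
        exact hz.1.2 hz.2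
      calc 𝒜.card + ℬ.card = 𝒜.card + (ℬ.image (fun T => Icc 1 n \ T)).card := by
            rw [card_image_of_injOn hinj]
        _ = (𝒜 ∪ ℬ.image (fun T => Icc 1 n \ T)).card := (card_union_of_disjoint hdisj).symm
        _ ≤ (ksubsets n a).card := card_le_card (union_subset hA hsub)
        _ = n.choose a := card_ksubsets n a
    have hnb : n - b = a := by omega
    rw [hnb, Nat.choose_self]
    omega
  · by_cases hcomp : ∀ x, x ∈ Icc 1 (n-1) → cpr x n 𝒜 = 𝒜 ∧ cpr x n ℬ = ℬ
    · -- fully compressed: split on the element n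
      have hcompA : ∀ x, x ∈ Icc 1 (n-1) → cpr x n 𝒜 = 𝒜 := fun x hx => (hcomp x hx).1
      have hcompB : ∀ x, x ∈ Icc 1 (n-1) → cpr x n ℬ = ℬ := fun x hx => (hcomp x hx).2
      have hn1 : 1 ≤ n := by omega
      set 𝒜1 := 𝒜.filter (fun S => n ∈ S) with h𝒜1
      set 𝒜0 := 𝒜.filter (fun S => ¬ n ∈ S) with h𝒜0
      set 𝒜1' := 𝒜1.image (fun S => S.erase n) with h𝒜1'
      set ℬ1 := ℬ.filter (fun S => n ∈ S) with hℬ1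
      set ℬ0 := ℬ.filter (fun S => ¬ n ∈ S) with hℬ0
      set ℬ1' := ℬ1.image (fun S => S.erase n) with hℬ1'
      have hsplitA : 𝒜1.card + 𝒜0.card = 𝒜.card :=
        card_filter_add_card_filter_not (fun S => n ∈ S)
      have hsplitB : ℬ1.card + ℬ0.card = ℬ.card :=
        card_filter_add_card_filter_not (fun S => n ∈ S)
      have hinjA : Set.InjOn (fun S : Finset ℕ => S.erase n) 𝒜1 := by
        intro S hS S' hS' hh
        rw [mem_coe, h𝒜1, mem_filter] at hS hS'
        rw [← insert_erase hS.2, ← insert_erase hS'.2]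
        simp only at hh
        rw [hh]
      have hinjB : Set.InjOn (fun S : Finset ℕ => S.erase n) ℬ1 := by
        intro S hS S' hS' hh
        rw [mem_coe, hℬ1, mem_filter] at hS hS'
        rw [← insert_erase hS.2, ← insert_erase hS'.2]
        simp only at hh
        rw [hh]
      have hcardA1 : 𝒜1'.card = 𝒜1.card := card_image_of_injOn hinjA
      have hcardB1 : ℬ1'.card = ℬ1.card := card_image_of_injOn hinjB
      have hsub0 : 𝒜0 ⊆ ksubsets (n-1) a := by
        intro S hS
        rw [h𝒜0, mem_filter] at hS
        obtain ⟨hSs, hSc⟩ := mem_ksubsets.1 (hA hS.1)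
        refine mem_ksubsets.2 ⟨?_, hSc⟩
        intro z hz
        have h1 := mem_Icc.1 (hSs hz)
        have h2 : z ≠ n := fun h' => hS.2 (h' ▸ hz)
        rw [mem_Icc]
        omega
      have hsubB0 : ℬ0 ⊆ ksubsets (n-1) b := by
        intro S hS
        rw [hℬ0, mem_filter] at hS
        obtain ⟨hSs, hSc⟩ := mem_ksubsets.1 (hB hS.1)
        refine mem_ksubsets.2 ⟨?_, hSc⟩
        intro z hz
        have h1 := mem_Icc.1 (hSs hz)
        have h2 : z ≠ n := fun h' => hS.2 (h' ▸ hz)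
        rw [mem_Icc]
        omega
      have hsub1 : 𝒜1' ⊆ ksubsets (n-1) (a-1) := by
        intro S hS
        obtain ⟨T, hT, rfl⟩ := mem_image.1 hS
        rw [h𝒜1, mem_filter] at hT
        obtain ⟨hTs, hTc⟩ := mem_ksubsets.1 (hA hT.1)
        refine mem_ksubsets.2 ⟨?_, by rw [card_erase_of_mem hT.2, hTc]⟩
        intro z hz
        have hze := mem_erase.1 hz
        have h1 := mem_Icc.1 (hTs hze.2)
        rw [mem_Icc]
        have := hze.1
        omega
      have hsubB1 : ℬ1' ⊆ ksubsets (n-1) (b-1) := by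
        intro S hS
        obtain ⟨T, hT, rfl⟩ := mem_image.1 hS
        rw [hℬ1, mem_filter] at hT
        obtain ⟨hTs, hTc⟩ := mem_ksubsets.1 (hB hT.1)
        refine mem_ksubsets.2 ⟨?_, by rw [card_erase_of_mem hT.2, hTc]⟩
        intro z hz
        have hze := mem_erase.1 hz
        have h1 := mem_Icc.1 (hTs hze.2)
        rw [mem_Icc]
        have := hze.1
        omega
      have hA0ne : 𝒜0.Nonempty := by
        obtain ⟨S, hS, hnS⟩ := exists_avoid hA (by omega) hAne hcompA
        exact ⟨S, mem_filter.2 ⟨hS, hnS⟩⟩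
      have hB0ne : ℬ0.Nonempty := by
        obtain ⟨S, hS, hnS⟩ := exists_avoid hB (by omega) hBne hcompB
        exact ⟨S, mem_filter.2 ⟨hS, hnS⟩⟩
      have hcr00 : crossInt 𝒜0 ℬ0 :=
        fun S hS T hT => hcr S (mem_filter.1 hS).1 T (mem_filter.1 hT).1
      have IH0 := ihn (n-1) (by omega) (wt 𝒜0 + wt ℬ0) a b 𝒜0 ℬ0 hb1 hba (by omega)
        hsub0 hsubB0 hA0ne hB0ne hcr00 le_rfl
      have e1 : n - 1 - b = n - b - 1 := by omega
      rw [e1] at IH0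
      have pas1 : n.choose a = (n-1).choose (a-1) + (n-1).choose a :=
        pascal' (by omega) (by omega)
      have pas2 : (n-b).choose a = (n-b-1).choose (a-1) + (n-b-1).choose a :=
        pascal' (by omega) (by omega)
      by_cases hB1e : ℬ1 = ∅
      · -- all of ℬ avoids n
        have hBc : ℬ1.card = 0 := by rw [hB1e]; rfl
        obtain ⟨B0, hB0⟩ := hB0ne
        have hB0m := mem_filter.1 hB0
        obtain ⟨hB0s, hB0c⟩ := mem_ksubsets.1 (hsubB0 hB0)
        have hmeet1 : ∀ S ∈ 𝒜1', (S ∩ B0).Nonempty := by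
          intro S hS
          obtain ⟨T, hT, rfl⟩ := mem_image.1 hS
          have hTm := mem_filter.1 hT
          obtain ⟨z, hz⟩ := hcr T hTm.1 B0 hB0m.1
          rw [mem_inter] at hz
          exact ⟨z, mem_inter.2 ⟨mem_erase.2 ⟨fun h' => hB0m.2 (h' ▸ hz.2), hz.1⟩, hz.2⟩⟩
        have M1 := meet_bound hsub1 hB0s hmeet1
        rw [hB0c] at M1
        rw [e1] at M1
        -- M1 : 𝒜1'.card + (n-b-1).choose (a-1) ≤ (n-1).choose (a-1)
        linarith [IH0, M1, pas1, pas2, hsplitA, hsplitB, hcardA1]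
      · have hB1ne : ℬ1.Nonempty := nonempty_iff_ne_empty.2 hB1e
        have hb2 : 2 ≤ b := by
          by_contra hb2'
          have hb1' : b = 1 := by omega
          obtain ⟨T, hT⟩ := hB1ne
          have hTm := mem_filter.1 hT
          obtain ⟨hTs, hTc⟩ := mem_ksubsets.1 (hB hTm.1)
          have hTsing : T = {n} := by
            rw [hb1'] at hTc
            obtain ⟨z, hz⟩ := card_eq_one.1 hTc
            rw [hz]
            rw [hz, mem_singleton] at hTm
            rw [hTm.2]
          obtain ⟨A0, hA0⟩ := hA0ne
          have hA0m := mem_filter.1 hA0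
          obtain ⟨z, hz⟩ := hcr A0 hA0m.1 T hTm.1
          rw [hTsing, mem_inter, mem_singleton] at hz
          exact hA0m.2 (hz.2 ▸ hz.1)
        obtain ⟨A0, hA0⟩ := hA0ne
        have hA0m := mem_filter.1 hA0
        obtain ⟨hA0s, hA0c⟩ := mem_ksubsets.1 (hsub0 hA0)
        have hmeetB1 : ∀ T ∈ ℬ1', (T ∩ A0).Nonempty := by
          intro T hT
          obtain ⟨TB, hTB, rfl⟩ := mem_image.1 hT
          have hTBm := mem_filter.1 hTB
          obtain ⟨z, hz⟩ := hcr A0 hA0m.1 TB hTBm.1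
          rw [mem_inter] at hz
          exact ⟨z, mem_inter.2 ⟨mem_erase.2 ⟨fun h' => hA0m.2 (h' ▸ hz.1), hz.2⟩, hz.1⟩⟩
        have MB1 := meet_bound hsubB1 hA0s hmeetB1
        rw [hA0c] at MB1
        have e3 : n - 1 - a = n - a - 1 := by omega
        rw [e3] at MB1
        -- MB1 : ℬ1'.card + (n-a-1).choose (b-1) ≤ (n-1).choose (b-1)
        by_cases hA1e : 𝒜1 = ∅
        · have hAc : 𝒜1.card = 0 := by rw [hA1e]; rfl
          obtain ⟨s, hs⟩ : ∃ s, n = a + b + s + 1 := ⟨n - a - b - 1, by omega⟩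
          have hG := cG (b-1) (a-1) (s+1) (by omega)
          rw [show (a-1) + (b-1) + (s+1) + 1 = n - 1 by omega,
            show (a-1) + (s+1) = n - b - 1 by omega,
            show (b-1) + (s+1) = n - a - 1 by omega] at hG
          -- hG : (n-1).choose (b-1) + (n-b-1).choose (a-1)
          --      ≤ (n-1).choose (a-1) + (n-a-1).choose (b-1)
          linarith [IH0, MB1, hG, pas1, pas2, hsplitA, hsplitB, hcardB1]
        · have hA1ne : 𝒜1.Nonempty := nonempty_iff_ne_empty.2 hA1e
          have h𝒜1'ne : 𝒜1'.Nonempty := hA1ne.image _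
          have hℬ1'ne : ℬ1'.Nonempty := hB1ne.image _
          have hcr11 : crossInt 𝒜1' ℬ1' := by
            intro S hS T hT
            obtain ⟨SA, hSA, rfl⟩ := mem_image.1 hS
            obtain ⟨TB, hTB, rfl⟩ := mem_image.1 hT
            exact erased_cross hA hB hcr hlt hcompA (mem_filter.1 hSA).1
              (mem_filter.1 hTB).1 (mem_filter.1 hSA).2 (mem_filter.1 hTB).2
          have IH1 := ihn (n-1) (by omega) (wt 𝒜1' + wt ℬ1') (a-1) (b-1) 𝒜1' ℬ1'
            (by omega) (by omega) (by omega) hsub1 hsubB1 h𝒜1'ne hℬ1'ne hcr11 le_rfl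
          have e4 : n - 1 - (b - 1) = n - b := by omega
          rw [e4] at IH1
          -- IH1 : 𝒜1'.card + ℬ1'.card + (n-b).choose (a-1) ≤ (n-1).choose (a-1) + 1
          have pas3 : (n-b).choose (a-1) = (n-b-1).choose (a-2) + (n-b-1).choose (a-1) :=
            pascal' (by omega) (by omega)
          have hpos : 0 < (n-b-1).choose (a-2) := Nat.choose_pos (by omega)
          linarith [IH0, IH1, pas1, pas2, pas3, hpos, hsplitA, hsplitB, hcardA1, hcardB1]
    · -- not compressed: compress and recurse on weight
      push_neg at hcomp
      obtain ⟨x, hx, hne⟩ := hcomp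
      have hxb := mem_Icc.1 hx
      have hn1 : 1 ≤ n := by omega
      have hxn : x < n := by omega
      have hxIcc : x ∈ Icc 1 n := mem_Icc.2 (by omega)
      have hwlt : wt (cpr x n 𝒜) + wt (cpr x n ℬ) < wt 𝒜 + wt ℬ := by
        by_cases h1 : cpr x n 𝒜 = 𝒜
        · have h2 : cpr x n ℬ ≠ ℬ := by tauto
          have := cpr_wt_lt hxn h2
          rw [h1]
          omega
        · have l1 := cpr_wt_lt hxn h1
          have l2 : wt (cpr x n ℬ) ≤ wt ℬ := by
            by_cases h2 : cpr x n ℬ = ℬ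
            · rw [h2]
            · exact (cpr_wt_lt hxn h2).le
          omega
      have hres := ihW (wt (cpr x n 𝒜) + wt (cpr x n ℬ)) (by omega) a b _ _ hb1 hba hab
        (cpr_subset_ks hxIcc hA) (cpr_subset_ks hxIcc hB)
        (card_pos.1 (by rw [cpr_card]; exact card_pos.2 hAne))
        (card_pos.1 (by rw [cpr_card]; exact card_pos.2 hBne))
        (cpr_cross hcr) le_rfl
      rwa [cpr_card, cpr_card] at hres

theorem stmt17 (n k1 k2 k3 : ℕ) (h1 : 1 ≤ k3) (h2 : k3 ≤ k2) (h3 : k2 ≤ k1)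
    (hn1 : k1 + k3 ≤ n) (hn2 : n < k1 + k2)
    (F1 F2 F3 : Finset (Finset ℕ))
    (hF1 : F1 ⊆ ksubsets n k1) (hF2 : F2 ⊆ ksubsets n k2) (hF3 : F3 ⊆ ksubsets n k3)
    (hne1 : F1.Nonempty) (hne2 : F2.Nonempty) (hne3 : F3.Nonempty)
    (h12 : crossInt F1 F2) (h13 : crossInt F1 F3) (h23 : crossInt F2 F3) :
    F1.card + F2.card + F3.card ≤
      (n.choose k1 - (n - k3).choose k1) + (n.choose k2 - (n - k3).choose k2) + 1 := by
  have hk31 : k3 ≤ k1 := le_trans h2 h3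
  have H1 := FTaux n (wt F1 + wt F3) k1 k3 F1 F3 h1 hk31 hn1 hF1 hF3 hne1 hne3 h13 le_rfl
  obtain ⟨B0, hB0⟩ := hne3
  obtain ⟨hB0s, hB0c⟩ := mem_ksubsets.1 (hF3 hB0)
  have H2 := meet_bound hF2 hB0s (fun S hS => h23 S hS B0 hB0)
  rw [hB0c] at H2
  have m1 : (n - k3).choose k1 ≤ n.choose k1 := Nat.choose_le_choose _ (by omega)
  have m2 : (n - k3).choose k2 ≤ n.choose k2 := Nat.choose_le_choose _ (by omega)
  omega
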